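/- arXiv:2005.05601 — 3 statements merged into one kernel-verified Lean document; each statement's English description precedes it below -/
import Mathlib

section
/- Let T be a tree with t ≥ 3 nodes. Then there exists a family of at most ⌊t/2⌋ 'triplets' (connected subtrees on exactly 3 nodes) whose union covers all nodes of T. -/
/-!
The bound holds for every connected graph, by induction on the number `n` of vertices, removing
two vertices at a time. Fix a root `r`, a vertex `u` farthest from `r` and its predecessor `w` on
a shortest path. If `w` has another neighbour `x` as far from `r` as `u`, take the triplet
`u w x` and remove `u, x`; otherwise take the triplet `p w u`, with `p` the predecessor of `w`,
and remove `u, w`. In both cases shortest paths from `r` to the remaining vertices avoid the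
removed ones, so the rest stays connected. For `n = 3, 4` one and two triplets suffice.
-/

theorem Fintype.exists_ne_ne_of_two_lt_card {α : Type*} [Fintype α] [DecidableEq α]
    (h : 2 < Fintype.card α) (a b : α) : ∃ c, c ≠ a ∧ c ≠ b := by
  have : ({a, b} : Finset α).card < Finset.univ.card := Finset.card_le_two.trans_lt h
  obtain ⟨c, -, hc⟩ := Finset.exists_mem_notMem_of_card_lt_card this
  simp only [Finset.mem_insert, Finset.mem_singleton, not_or] at hc
  exact ⟨c, hc⟩

namespace SimpleGraph

variable {V : Type*} {G : SimpleGraph V}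

namespace Walk

variable {r v z : V} {p : G.Walk r v}

theorem dist_getVert_of_length_eq_dist (hp : p.length = G.dist r v) {i : ℕ}
    (hi : i ≤ p.length) : G.dist r (p.getVert i) = i := by
  refine le_antisymm ?_ ?_
  · simpa [hi] using dist_le (p.take i)
  · obtain ⟨q, hq⟩ := (p.take i).reachable.exists_walk_length_eq_dist
    have := dist_le (q.append (p.drop i))
    simp only [length_append, drop_length] at this
    omega

theorem eq_of_mem_support_of_dist_le (hp : p.length = G.dist r v) (hz : z ∈ p.support)
    (hvz : G.dist r v ≤ G.dist r z) : z = v := by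
  obtain ⟨i, rfl, hi⟩ := mem_support_iff_exists_getVert.mp hz
  rw [dist_getVert_of_length_eq_dist hp hi] at hvz
  rw [show i = p.length by omega, getVert_length]

theorem exists_adj_dist_succ_of_mem_support (hp : p.length = G.dist r v) (hz : z ∈ p.support)
    (hzv : z ≠ v) : ∃ y ∈ p.support, G.Adj z y ∧ G.dist r y = G.dist r z + 1 := by
  obtain ⟨i, rfl, hi⟩ := mem_support_iff_exists_getVert.mp hz
  have hi' : i < p.length := hi.lt_of_ne fun h => hzv (h ▸ p.getVert_length)
  refine ⟨p.getVert (i + 1), p.getVert_mem_support _, p.adj_getVert_succ hi', ?_⟩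
  rw [dist_getVert_of_length_eq_dist hp hi, dist_getVert_of_length_eq_dist hp hi']

end Walk

theorem induce_connected_of_forall_walk {s : Set V} {r : V} (hr : r ∈ s)
    (h : ∀ v ∈ s, ∃ p : G.Walk r v, ∀ z ∈ p.support, z ∈ s) : (G.induce s).Connected := by
  refine induce_connected_of_patches r hr fun {v} hv => ?_
  obtain ⟨p, hp⟩ := h v hv
  exact ⟨_, hp, p.start_mem_support, p.end_mem_support, p.connected_induce_support.preconnected _ _⟩

theorem induce_compl_connected_of_shortest_walks_avoid (hG : G.Connected) {S : Set V} {r : V}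
    (hr : r ∉ S) (h : ∀ v ∉ S, ∀ p : G.Walk r v, p.length = G.dist r v → ∀ z ∈ p.support, z ∉ S) :
    (G.induce Sᶜ).Connected := by
  refine induce_connected_of_forall_walk hr fun v hv => ?_
  obtain ⟨p, hp⟩ := hG.exists_walk_length_eq_dist r v
  exact ⟨p, h v hv p hp⟩

theorem induce_compl_connected_of_forall_dist_le (hG : G.Connected) {S : Set V} {r : V}
    (hr : r ∉ S) (hS : ∀ z ∈ S, ∀ y, G.dist r y ≤ G.dist r z) : (G.induce Sᶜ).Connected := by
  refine induce_compl_connected_of_shortest_walks_avoid hG hr fun v hv p hp z hz hzS => ?_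
  exact hv (p.eq_of_mem_support_of_dist_le hp hz (hS z hzS v) ▸ hzS)

theorem induce_compl_pair_connected_of_unique_child (hG : G.Connected) {r u w : V}
    (hur : u ≠ r) (hwr : w ≠ r) (hu : ∀ y, G.dist r y ≤ G.dist r u)
    (hchild : ∀ y, G.Adj w y → G.dist r y = G.dist r w + 1 → y = u) :
    (G.induce {u, w}ᶜ).Connected := by
  refine induce_compl_connected_of_shortest_walks_avoid hG (r := r) (by simp [hur.symm, hwr.symm])
    fun v hv p hp z hz hzS => ?_
  simp only [Set.mem_insert_iff, Set.mem_singleton_iff, not_or] at hv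
  have hu_not_mem : u ∉ p.support := fun hmem =>
    hv.1 (p.eq_of_mem_support_of_dist_le hp hmem (hu v)).symm
  rcases hzS with rfl | rfl
  · exact hu_not_mem hz
  · obtain ⟨y, hy, hzy, hdy⟩ := p.exists_adj_dist_succ_of_mem_support hp hz (Ne.symm hv.2)
    exact hu_not_mem (hchild y hzy hdy ▸ hy)

variable [DecidableEq V]

def IsTriplet (G : SimpleGraph V) (s : Finset V) : Prop :=
  ∃ a b c, G.Adj a b ∧ G.Adj b c ∧ a ≠ c ∧ s = {a, b, c}

def IsTripletCover (G : SimpleGraph V) (F : Finset (Finset V)) : Prop :=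
  (∀ s ∈ F, IsTriplet G s) ∧ ∀ v, ∃ s ∈ F, v ∈ s

namespace IsTriplet

variable {s : Finset V}

theorem card_eq (hs : IsTriplet G s) : s.card = 3 := by
  obtain ⟨a, b, c, hab, hbc, hac, rfl⟩ := hs
  exact Finset.card_eq_three.mpr ⟨a, b, c, hab.ne, hac, hbc.ne, rfl⟩

theorem induce_connected (hs : IsTriplet G s) : (G.induce (s : Set V)).Connected := by
  obtain ⟨a, b, c, hab, hbc, -, rfl⟩ := hs
  let p : G.Walk a c := .cons hab (.cons hbc .nil)
  have hp : (({a, b, c} : Finset V) : Set V) = {v | v ∈ p.support} := by ext; simp [p]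
  exact hp ▸ p.connected_induce_support

theorem map {W : Type*} [DecidableEq W] {H : SimpleGraph W} (f : G ↪g H) (hs : IsTriplet G s) :
    IsTriplet H (s.map f.toEmbedding) := by
  obtain ⟨a, b, c, hab, hbc, hac, rfl⟩ := hs
  exact ⟨f a, f b, f c, f.map_adj_iff.mpr hab, f.map_adj_iff.mpr hbc, f.injective.ne hac,
    by simp⟩

end IsTriplet

theorem IsTripletCover.insert_image_induce_compl {t : Finset V} {S : Set V} (ht : IsTriplet G t)
    (hSt : S ⊆ t) {F : Finset (Finset ↥Sᶜ)} (hF : IsTripletCover (G.induce Sᶜ) F) :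
    IsTripletCover G
      (insert t (F.image (Finset.map (Embedding.induce (G := G) Sᶜ).toEmbedding))) := by
  refine ⟨?_, fun v => ?_⟩
  · simp only [Finset.mem_insert, Finset.mem_image]
    rintro s (rfl | ⟨s, hs, rfl⟩)
    exacts [ht, (hF.1 s hs).map _]
  · by_cases hv : v ∈ S
    · exact ⟨t, Finset.mem_insert_self _ _, hSt hv⟩
    · obtain ⟨s, hs, hvs⟩ := hF.2 ⟨v, hv⟩
      exact ⟨_, Finset.mem_insert_of_mem (Finset.mem_image_of_mem _ hs),
        Finset.mem_map_of_mem _ hvs⟩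

variable [Fintype V]

theorem Connected.exists_isTriplet_mem (hG : G.Connected) (h3 : 3 ≤ Fintype.card V) (z : V) :
    ∃ t, IsTriplet G t ∧ z ∈ t := by
  by_cases hfar : ∃ y, 2 ≤ G.dist z y
  · obtain ⟨y, hy⟩ := hfar
    obtain ⟨p, hp⟩ := hG.exists_walk_length_eq_dist z y
    have h2 : G.dist z (p.getVert 2) = 2 := p.dist_getVert_of_length_eq_dist hp (by omega)
    refine ⟨{z, p.getVert 1, p.getVert 2}, ⟨z, p.getVert 1, p.getVert 2, ?_, ?_, ?_, rfl⟩, by simp⟩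
    · simpa using p.adj_getVert_succ (i := 0) (by omega)
    · exact p.adj_getVert_succ (by omega)
    · rintro h; rw [← h, dist_self] at h2; omega
  · push Not at hfar
    have hadj : ∀ y, y ≠ z → G.Adj z y := fun y hy =>
      dist_eq_one_iff_adj.mp (by have := hfar y; have := (hG z y).pos_dist_of_ne hy.symm; omega)
    obtain ⟨a, haz⟩ := Fintype.exists_ne_of_one_lt_card (by omega) z
    obtain ⟨c, hcz, hca⟩ := Fintype.exists_ne_ne_of_two_lt_card (by omega) z a
    exact ⟨{a, z, c}, ⟨a, z, c, (hadj a haz).symm, hadj c hcz, hca.symm, rfl⟩, by simp⟩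

theorem Connected.exists_isTriplet_induce_compl_connected (hG : G.Connected)
    (h3 : 3 ≤ Fintype.card V) :
    ∃ t x y, IsTriplet G t ∧ x ∈ t ∧ y ∈ t ∧ x ≠ y ∧ (G.induce {x, y}ᶜ).Connected := by
  have : Nonempty V := Fintype.card_pos_iff.mp (by omega)
  obtain ⟨r⟩ := ‹Nonempty V›
  obtain ⟨u, hu⟩ := Finite.exists_max (G.dist r)
  set m := G.dist r u with hm
  have hpos : ∀ y, y ≠ r → 0 < G.dist r y := fun y hy => (hG r y).pos_dist_of_ne hy.symm
  have hm1 : 1 ≤ m := by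
    obtain ⟨y, hy⟩ := Fintype.exists_ne_of_one_lt_card (by omega) r
    exact (hpos y hy).trans_le (hu y)
  have hur : u ≠ r := by rintro rfl; simp [hm] at hm1
  obtain ⟨P, hP⟩ := hG.exists_walk_length_eq_dist r u
  set w := P.getVert (m - 1)
  have hdw : G.dist r w = m - 1 := P.dist_getVert_of_length_eq_dist hP (by omega)
  have hwu : G.Adj w u := by
    simpa [show m - 1 + 1 = P.length by omega] using P.adj_getVert_succ (i := m - 1) (by omega)
  by_cases hsibling : ∃ x, x ≠ u ∧ G.Adj w x ∧ G.dist r x = m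
  · obtain ⟨x, hxu, hwx, hdx⟩ := hsibling
    refine ⟨{u, w, x}, u, x, ⟨u, w, x, hwu.symm, hwx, hxu.symm, rfl⟩, by simp, by simp,
      hxu.symm, induce_compl_connected_of_forall_dist_le hG (r := r) ?_ ?_⟩
    · rintro (h | h)
      · exact hur h.symm
      · rw [← h, dist_self] at hdx; omega
    · rintro z (rfl | rfl) <;> simpa [hdx] using hu
  · push Not at hsibling
    -- If `m = 1` then `w = r`, and any third vertex would be a sibling of `u`.
    have hm2 : 2 ≤ m := by
      by_contra! hm2
      have hwr : w = r := by simp [w, show m - 1 = 0 by omega]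
      obtain ⟨x, hxr, hxu⟩ := Fintype.exists_ne_ne_of_two_lt_card (by omega) r u
      have hdx : G.dist r x = 1 := by have := hpos x hxr; have := hu x; omega
      exact hsibling x hxu (hwr ▸ dist_eq_one_iff_adj.mp hdx) (by omega)
    set p0 := P.getVert (m - 2)
    have hp0w : G.Adj p0 w := by
      simpa [show m - 2 + 1 = m - 1 by omega] using P.adj_getVert_succ (i := m - 2) (by omega)
    have hdp0 : G.dist r p0 = m - 2 := P.dist_getVert_of_length_eq_dist hP (by omega)
    refine ⟨{p0, w, u}, u, w, ⟨p0, w, u, hp0w, hwu, ?_, rfl⟩, by simp, by simp, hwu.ne',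
      induce_compl_pair_connected_of_unique_child hG hur ?_ hu fun y hwy hdy => ?_⟩
    · rintro h; rw [h] at hdp0; omega
    · rintro h; rw [h, dist_self] at hdw; omega
    · by_contra hyu; exact hsibling y hyu hwy (by omega)

theorem Connected.exists_isTripletCover (hG : G.Connected) (h3 : 3 ≤ Fintype.card V) :
    ∃ F, F.card ≤ Fintype.card V / 2 ∧ IsTripletCover G F := by
  induction hn : Fintype.card V using Nat.strong_induction_on generalizing V with
  | _ n ih =>
  obtain ⟨t, x, y, ht, hx, hy, hxy, hconn⟩ := hG.exists_isTriplet_induce_compl_connected h3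
  rcases (show n = 3 ∨ n = 4 ∨ 5 ≤ n by omega) with rfl | rfl | h5
  · have htu : t = Finset.univ := Finset.eq_univ_of_card t (by rw [ht.card_eq, hn])
    exact ⟨{t}, by simp, by simpa using ht, fun v => ⟨t, by simp [htu]⟩⟩
  · obtain ⟨z, -, hz⟩ := Finset.exists_mem_notMem_of_card_lt_card (t := Finset.univ)
      (by rw [ht.card_eq, Finset.card_univ, hn]; omega)
    obtain ⟨t', ht', hzt'⟩ := hG.exists_isTriplet_mem h3 z
    have hzt : insert z t = Finset.univ :=
      Finset.eq_univ_of_card _ (by rw [Finset.card_insert_of_notMem hz, ht.card_eq, hn])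
    refine ⟨{t, t'}, Finset.card_le_two, by simp [ht, ht'], fun v => ?_⟩
    have hv : v ∈ insert z t := hzt ▸ Finset.mem_univ v
    rcases Finset.mem_insert.mp hv with rfl | hvt
    exacts [⟨t', by simp, hzt'⟩, ⟨t, by simp, hvt⟩]
  · have hcard : Fintype.card ↥({x, y} : Set V)ᶜ = n - 2 := by
      rw [Fintype.card_compl_set, hn, ← Set.toFinset_card]
      simp [hxy]
    obtain ⟨F, hFcard, hF⟩ := ih (n - 2) (by omega) hconn (by omega) hcard
    refine ⟨_, ?_, hF.insert_image_induce_compl ht (by simp [Set.insert_subset_iff, hx, hy])⟩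
    calc _ ≤ (F.image _).card + 1 := Finset.card_insert_le _ _
      _ ≤ F.card + 1 := by grw [Finset.card_image_le]
      _ ≤ n / 2 := by omega

end SimpleGraph

/-- Let `T` be a tree with `t ≥ 3` nodes. Then there exists a family of at most
`⌊t/2⌋` triplets (connected subtrees on exactly 3 nodes) whose union covers all nodes of `T`. -/
theorem tree_triplet_cover {V : Type} [Fintype V] [DecidableEq V]
    (G : SimpleGraph V) (hT : G.IsTree) (h3 : 3 ≤ Fintype.card V) :
    ∃ F : Finset (Finset V),
      F.card ≤ Fintype.card V / 2 ∧
      (∀ s ∈ F, s.card = 3 ∧ (G.induce (↑s : Set V)).Connected) ∧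
      (∀ v : V, ∃ s ∈ F, v ∈ s) := by
  obtain ⟨F, hFcard, hFtriplets, hFcover⟩ := hT.connected.exists_isTripletCover h3
  exact ⟨F, hFcard, fun s hs => ⟨(hFtriplets s hs).card_eq, (hFtriplets s hs).induce_connected⟩,
    hFcover⟩
end

section
/- If a triangulated simple polygon on n vertices is properly 3-colored, then the smallest color class has at most ⌊n/3⌋ vertices, and placing a guard on every vertex of that color class guards the entire polygon. -/
open scoped Classical

noncomputable section

/-- A simple polygon with `n` vertices: a closed polygonal region in the plane bounded by a
non-self-intersecting closed polygonal chain on the vertices. -/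
structure SimplePolygon (n : ℕ) [NeZero n] where
  vertex : Fin n → ℝ × ℝ
  inj : Function.Injective vertex
  region : Set (ℝ × ℝ)
  compact : IsCompact region
  vertex_mem : ∀ i, vertex i ∈ region
  nondeg : 3 ≤ n
  /-- the boundary chain is non-self-intersecting: non-adjacent edges are disjoint -/
  edges_noncross : ∀ i j : Fin n, i ≠ j → i + 1 ≠ j → j + 1 ≠ i →
    segment ℝ (vertex i) (vertex (i + 1)) ∩ segment ℝ (vertex j) (vertex (j + 1)) = ∅
  /-- the polygon sides form the boundary of the region -/
  edges_boundary : ∀ i : Fin n, segment ℝ (vertex i) (vertex (i + 1)) ⊆ frontier region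
  frontier_sub : frontier region ⊆ ⋃ i : Fin n, segment ℝ (vertex i) (vertex (i + 1))

variable {n : ℕ} [NeZero n]

/-- The closed triangle spanned by three polygon vertices. -/
def SimplePolygon.tri (P : SimplePolygon n) (t : Fin n × Fin n × Fin n) : Set (ℝ × ℝ) :=
  convexHull ℝ {P.vertex t.1, P.vertex t.2.1, P.vertex t.2.2}

/-- The set of (indices of) vertices of a triangle. -/
def triVerts (t : Fin n × Fin n × Fin n) : Set (Fin n) := {t.1, t.2.1, t.2.2}

/-- A diagonal: a segment between two polygon vertices whose interior lies strictly inside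
the polygon. -/
def SimplePolygon.IsDiagonal (P : SimplePolygon n) (i j : Fin n) : Prop :=
  i ≠ j ∧ openSegment ℝ (P.vertex i) (P.vertex j) ⊆ interior P.region

/-- A valid side of a triangle in a triangulation: either a polygon side or a diagonal. -/
def SimplePolygon.sideOk (P : SimplePolygon n) (i j : Fin n) : Prop :=
  j = i + 1 ∨ i = j + 1 ∨ P.IsDiagonal i j

/-- A triangulation of a simple polygon: a decomposition of the region into triangles with
pairwise disjoint interiors, whose vertices are polygon vertices and whose sides are polygon
sides or pairwise non-crossing diagonals (a maximal such family: every piece is a triangle). -/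
structure Triangulation (P : SimplePolygon n) where
  tris : Finset (Fin n × Fin n × Fin n)
  distinct : ∀ t ∈ tris, t.1 ≠ t.2.1 ∧ t.2.1 ≠ t.2.2 ∧ t.1 ≠ t.2.2
  covers : ⋃ t ∈ tris, P.tri t = P.region
  int_disjoint : ∀ t ∈ tris, ∀ s ∈ tris, t ≠ s →
    interior (P.tri t) ∩ interior (P.tri s) = ∅
  sides : ∀ t ∈ tris, P.sideOk t.1 t.2.1 ∧ P.sideOk t.2.1 t.2.2 ∧ P.sideOk t.1 t.2.2

/-- The graph of a triangulated simple polygon: the polygon's cycle plus the triangulation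
diagonals (equivalently, edges between any two vertices of a common triangle). -/
def polyGraph {P : SimplePolygon n} (T : Triangulation P) : SimpleGraph (Fin n) :=
  SimpleGraph.fromRel (fun i j =>
    j = i + 1 ∨ ∃ t ∈ T.tris, i ∈ triVerts t ∧ j ∈ triVerts t)

/-- If a triangulated simple polygon on `n` vertices is properly 3-colored,
then the smallest color class has at most `⌊n/3⌋` vertices, and placing a guard on every
vertex of that color class guards the entire polygon. -/
theorem smallest_color_class_guards {n : ℕ} [NeZero n] (P : SimplePolygon n)
    (T : Triangulation P) (c : (polyGraph T).Coloring (Fin 3)) :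
    ∃ k : Fin 3,
      (∀ k' : Fin 3, (Finset.univ.filter fun i => c i = k).card ≤
        (Finset.univ.filter fun i => c i = k').card) ∧
      (Finset.univ.filter fun i => c i = k).card ≤ n / 3 ∧
      (∀ x ∈ P.region, ∃ i : Fin n, c i = k ∧ segment ℝ (P.vertex i) x ⊆ P.region) := by
  classical
  set f : Fin 3 → ℕ := fun k => (Finset.univ.filter fun i => c i = k).card with hf
  obtain ⟨k, -, hk⟩ := Finset.exists_min_image Finset.univ f ⟨0, Finset.mem_univ 0⟩
  have hkmin : ∀ k' : Fin 3, f k ≤ f k' := fun k' => hk k' (Finset.mem_univ k')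
  have hsum : ∑ k' : Fin 3, f k' = n := by
    have := Finset.card_eq_sum_card_fiberwise
      (f := c) (s := (Finset.univ : Finset (Fin n))) (t := (Finset.univ : Finset (Fin 3)))
      (fun i _ => Finset.mem_univ (c i))
    simpa [hf] using this.symm
  have hbound : f k ≤ n / 3 := by
    have h3 : f k * 3 ≤ n := by
      calc f k * 3 = f k + f k + f k := by ring
        _ ≤ f 0 + f 1 + f 2 := by
            have := hkmin 0; have := hkmin 1; have := hkmin 2; omega
        _ = ∑ k' : Fin 3, f k' := by
            simp [Fin.sum_univ_three]
        _ = n := hsum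
    omega
  refine ⟨k, hkmin, hbound, ?_⟩
  intro x hx
  -- x lies in some triangle
  rw [← T.covers] at hx
  simp only [Set.mem_iUnion] at hx
  obtain ⟨t, ht, hxt⟩ := hx
  obtain ⟨h12, h23, h13⟩ := T.distinct t ht
  -- the three vertices of t are pairwise adjacent in the graph
  have adj : ∀ a b : Fin n, a ≠ b → a ∈ triVerts t → b ∈ triVerts t →
      (polyGraph T).Adj a b := by
    intro a b hab ha hb
    exact ⟨hab, Or.inl (Or.inr ⟨t, ht, ha, hb⟩)⟩
  have m1 : t.1 ∈ triVerts t := Or.inl rfl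
  have m2 : t.2.1 ∈ triVerts t := Or.inr (Or.inl rfl)
  have m3 : t.2.2 ∈ triVerts t := Or.inr (Or.inr rfl)
  have c12 : c t.1 ≠ c t.2.1 := c.valid (adj _ _ h12 m1 m2)
  have c23 : c t.2.1 ≠ c t.2.2 := c.valid (adj _ _ h23 m2 m3)
  have c13 : c t.1 ≠ c t.2.2 := c.valid (adj _ _ h13 m1 m3)
  -- one of the three vertices has color k
  have hex : ∃ i ∈ triVerts t, c i = k := by
    by_contra h
    push_neg at h
    have h1 := h t.1 m1
    have h2 := h t.2.1 m2
    have h3 := h t.2.2 m3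
    have v12 : (c t.1).val ≠ (c t.2.1).val := fun e => c12 (Fin.val_injective e)
    have v23 : (c t.2.1).val ≠ (c t.2.2).val := fun e => c23 (Fin.val_injective e)
    have v13 : (c t.1).val ≠ (c t.2.2).val := fun e => c13 (Fin.val_injective e)
    have w1 : (c t.1).val ≠ k.val := fun e => h1 (Fin.val_injective e)
    have w2 : (c t.2.1).val ≠ k.val := fun e => h2 (Fin.val_injective e)
    have w3 : (c t.2.2).val ≠ k.val := fun e => h3 (Fin.val_injective e)
    have b1 := (c t.1).isLt
    have b2 := (c t.2.1).isLt
    have b3 := (c t.2.2).isLt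
    have bk := k.isLt
    omega
  obtain ⟨i, hi, hci⟩ := hex
  refine ⟨i, hci, ?_⟩
  -- the segment from vertex i to x lies in the triangle, hence in the region
  have htri_sub : P.tri t ⊆ P.region := by
    rw [← T.covers]
    exact Set.subset_iUnion₂ (s := fun t _ => P.tri t) t ht
  have hvi : P.vertex i ∈ P.tri t := by
    rcases hi with h | h | h <;> subst h <;>
      exact subset_convexHull ℝ _ (by simp [Set.mem_insert_iff])
  have hconv : Convex ℝ (P.tri t) := convex_convexHull ℝ _
  exact fun y hy => htri_sub (hconv.segment_subset hvi hxt hy)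
end
end

section
/- Let T be a tree with t nodes of maximum degree 3. If T is decomposed into triplets by the greedy procedure and two triplets of the decomposition share at least one tree node, then the two triangles of the polygon triangulation corresponding to the shared node each contain both associated guards as vertices; consequently, the two guards are mutually visible. -/
open scoped Classical

noncomputable section

variable {n : ℕ} [NeZero n]

/-- If two triplets of triangles of the triangulation share a triangle `t`,
and each triplet's guard is placed at a vertex common to all triangles of its triplet, then both
guards are vertices of `t`, and consequently they are mutually visible (the segment between
them lies in the polygon). -/
theorem shared_triangle_guards_visible {n : ℕ} [NeZero n] (P : SimplePolygon n)
    (T : Triangulation P)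
    (trip₁ trip₂ : Finset (Fin n × Fin n × Fin n))
    (h₁ : trip₁ ⊆ T.tris) (h₂ : trip₂ ⊆ T.tris)
    (hc₁ : trip₁.card = 3) (hc₂ : trip₂.card = 3)
    (t : Fin n × Fin n × Fin n) (ht₁ : t ∈ trip₁) (ht₂ : t ∈ trip₂)
    (g₁ g₂ : Fin n)
    (hg₁ : ∀ s ∈ trip₁, g₁ ∈ triVerts s)
    (hg₂ : ∀ s ∈ trip₂, g₂ ∈ triVerts s) :
    (g₁ ∈ triVerts t ∧ g₂ ∈ triVerts t) ∧
      segment ℝ (P.vertex g₁) (P.vertex g₂) ⊆ P.region := by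
  have hgt₁ : g₁ ∈ triVerts t := hg₁ t ht₁
  have hgt₂ : g₂ ∈ triVerts t := hg₂ t ht₂
  refine ⟨⟨hgt₁, hgt₂⟩, ?_⟩
  have htri : P.tri t ⊆ P.region := by
    rw [← T.covers]
    exact Set.subset_biUnion_of_mem (h₁ ht₁)
  have hmem : ∀ g : Fin n, g ∈ triVerts t → P.vertex g ∈ P.tri t := by
    intro g hg
    apply subset_convexHull ℝ _
    rcases hg with h | h | h <;> simp_all [triVerts]
  have hconv : Convex ℝ (P.tri t) := convex_convexHull ℝ _
  exact fun x hx => htri (hconv.segment_subset (hmem g₁ hgt₁) (hmem g₂ hgt₂) hx)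
end
end
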